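/- For n ≥ 2, the thickness of K_n □ P_2 is at most the thickness of K_{n+1}. -/

import Mathlib

open SimpleGraph

/-- A simple graph is planar if it admits a plane drawing: vertices are mapped
injectively to points of the plane, edges to simple continuous arcs joining the
images of their endpoints, such that arcs pass through vertex points only at
their own endpoints and two distinct arcs meet only in vertex points. -/
def SimpleGraph.IsPlanar {V : Type*} (G : SimpleGraph V) : Prop :=
  ∃ (pos : V → ℝ × ℝ) (arc : G.edgeSet → ℝ → ℝ × ℝ),
    Function.Injective pos ∧
    (∀ e, Continuous (arc e)) ∧
    (∀ e, Set.InjOn (arc e) (Set.Icc 0 1)) ∧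
    (∀ e : G.edgeSet, ∃ u v, (e : Sym2 V) = s(u, v) ∧ arc e 0 = pos u ∧ arc e 1 = pos v) ∧
    (∀ e : G.edgeSet, ∀ w : V, pos w ∈ arc e '' Set.Icc 0 1 → w ∈ (e : Sym2 V)) ∧
    (∀ e f : G.edgeSet, e ≠ f →
      ∀ p ∈ (arc e '' Set.Icc 0 1) ∩ (arc f '' Set.Icc 0 1), p ∈ Set.range pos)

/-- The thickness of a graph: the least `t` such that the edge set of `G` can be
partitioned among `t` planar spanning subgraphs. -/
noncomputable def SimpleGraph.thickness {V : Type*} (G : SimpleGraph V) : ℕ :=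
  sInf {t | ∃ f : Fin t → SimpleGraph V,
    (∀ i, f i ≤ G) ∧ (∀ i, (f i).IsPlanar) ∧
    (∀ e ∈ G.edgeSet, ∃! i, e ∈ (f i).edgeSet)}

namespace ThicknessAux
open Set

noncomputable def cl (t : ℝ) : ℝ := max 0 (min 1 t)

lemma cl_mem (t : ℝ) : cl t ∈ Icc (0:ℝ) 1 := by
  constructor
  · exact le_max_left _ _
  · simp only [cl, max_le_iff]
    constructor
    · norm_num
    · exact min_le_left _ _

lemma cl_of_mem {t : ℝ} (h : t ∈ Icc (0:ℝ) 1) : cl t = t := by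
  simp only [cl]
  rw [min_eq_right h.2, max_eq_right h.1]

lemma cl_zero : cl 0 = 0 := cl_of_mem (by norm_num)
lemma cl_one : cl 1 = 1 := cl_of_mem (by norm_num)

lemma continuous_cl : Continuous cl := by
  unfold cl; fun_prop

lemma mem_from_single {V : Type*} {e₀ x : Sym2 V}
    (h : x ∈ (SimpleGraph.fromEdgeSet {e₀}).edgeSet) : x = e₀ := by
  rw [edgeSet_fromEdgeSet] at h
  exact h.1

lemma single_planar {V : Type*} [Fintype V] (e₀ : Sym2 V) (h : ¬ e₀.IsDiag) :
    (SimpleGraph.fromEdgeSet {e₀}).IsPlanar := by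
  classical
  obtain ⟨x, y, rfl⟩ : ∃ x y, e₀ = s(x, y) := by
    induction e₀ using Sym2.ind with | _ a b => exact ⟨a, b, rfl⟩
  have hxy : x ≠ y := by simpa using h
  set ρ : V → ℝ := fun v => ((Fintype.equivFin V v : ℕ) : ℝ) with hρ
  have hρinj : Function.Injective ρ := by
    intro a b hab
    exact (Fintype.equivFin V).injective (Fin.ext (Nat.cast_injective hab))
  set pos : V → ℝ × ℝ := fun v => (ρ v, ρ v ^ 2) with hpos
  have hposinj : Function.Injective pos := by
    intro a b hab
    exact hρinj (congrArg Prod.fst hab)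
  have hab : ρ x ≠ ρ y := fun hc => hxy (hρinj hc)
  refine ⟨pos, fun _ t => (1 - cl t) • pos x + (cl t) • pos y, hposinj, ?_, ?_, ?_, ?_, ?_⟩
  · intro e
    exact ((continuous_const.sub continuous_cl).smul continuous_const).add
      (continuous_cl.smul continuous_const)
  · intro e s hs t ht hst
    simp only [cl_of_mem hs, cl_of_mem ht] at hst
    have h1 := congrArg Prod.fst hst
    simp only [Prod.fst_add, Prod.smul_fst, smul_eq_mul] at h1
    have : s * (ρ y - ρ x) = t * (ρ y - ρ x) := by ring_nf; ring_nf at h1; linarith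
    exact mul_right_cancel₀ (sub_ne_zero.mpr (Ne.symm hab)) this
  · intro e
    exact ⟨x, y, mem_from_single e.2, by simp [cl_zero], by simp [cl_one]⟩
  · rintro e z ⟨t, ht, hz⟩
    have he1 : (e : Sym2 V) = s(x, y) := mem_from_single e.2
    rw [he1, Sym2.mem_iff]
    simp only [cl_of_mem ht] at hz
    have h1 := congrArg Prod.fst hz
    have h2 := congrArg Prod.snd hz
    simp only [Prod.fst_add, Prod.snd_add, Prod.smul_fst, Prod.smul_snd, smul_eq_mul] at h1 h2
    have key : t * (1 - t) * (ρ x - ρ y) ^ 2 = 0 := by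
      linear_combination h2 - ((1 - t) * ρ x + t * ρ y + ρ z) * h1
    have h3 : (ρ x - ρ y) ^ 2 ≠ 0 := pow_ne_zero _ (sub_ne_zero.mpr hab)
    rcases mul_eq_zero.mp key with h4 | h4
    · rcases mul_eq_zero.mp h4 with h5 | h5
      · left
        apply hposinj
        rw [← hz, h5]; simp
      · right
        apply hposinj
        have ht1 : t = 1 := by linarith
        rw [← hz, ht1]; simp
    · exact absurd h4 h3
  · intro e f hef p hp
    exact absurd (Subtype.ext ((mem_from_single e.2).trans (mem_from_single f.2).symm)) hef

lemma exists_decomp {V : Type*} [Fintype V] (G : SimpleGraph V) :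
    ∃ (t : ℕ) (f : Fin t → SimpleGraph V), (∀ i, f i ≤ G) ∧ (∀ i, (f i).IsPlanar) ∧
      (∀ e ∈ G.edgeSet, ∃! i, e ∈ (f i).edgeSet) := by
  classical
  haveI : Fintype G.edgeSet := Fintype.ofFinite _
  set t := Fintype.card G.edgeSet with ht
  set eq : G.edgeSet ≃ Fin t := Fintype.equivFin _ with heq
  refine ⟨t, fun i => SimpleGraph.fromEdgeSet {(eq.symm i : Sym2 V)}, ?_, ?_, ?_⟩
  · intro i
    rw [← SimpleGraph.edgeSet_subset_edgeSet]
    rw [edgeSet_fromEdgeSet]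
    rintro e ⟨he, -⟩
    simp only [mem_singleton_iff] at he
    exact he ▸ (eq.symm i).2
  · intro i
    exact single_planar _ (SimpleGraph.not_isDiag_of_mem_edgeSet G (eq.symm i).2)
  · intro e he
    refine ⟨eq ⟨e, he⟩, ?_, ?_⟩
    · show e ∈ (SimpleGraph.fromEdgeSet {(eq.symm (eq ⟨e, he⟩) : Sym2 V)}).edgeSet
      rw [Equiv.symm_apply_apply, edgeSet_fromEdgeSet]
      exact ⟨by simp, SimpleGraph.not_isDiag_of_mem_edgeSet G he⟩
    · intro i hi
      have hi' : e ∈ (SimpleGraph.fromEdgeSet {(eq.symm i : Sym2 V)}).edgeSet := hi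
      have h1 := mem_from_single hi'
      have h2 : eq.symm i = ⟨e, he⟩ := Subtype.ext h1.symm
      rw [← h2, Equiv.apply_symm_apply]

lemma fin2_eq (b : Fin 2) : b = 0 ∨ b = 1 := by omega

lemma fin2_cases {a b : Fin 2} (h : a ≠ b) (c : Fin 2) : c = a ∨ c = b := by
  rcases fin2_eq a with rfl | rfl <;> rcases fin2_eq b with rfl | rfl <;>
    rcases fin2_eq c with rfl | rfl <;> simp_all

/-- level-dependent transform: inversion for level 0, scaling for level 1 -/
noncomputable def Tm (ε : ℝ) (b : Fin 2) (z : ℝ × ℝ) : ℝ × ℝ :=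
  if b = 0 then (‖z‖ ^ 2)⁻¹ • z else (ε ^ 2)⁻¹ • z

lemma Tm_zero_def (ε : ℝ) (z : ℝ × ℝ) : Tm ε 0 z = (‖z‖ ^ 2)⁻¹ • z := if_pos rfl

lemma Tm_one_def (ε : ℝ) (z : ℝ × ℝ) : Tm ε 1 z = (ε ^ 2)⁻¹ • z :=
  if_neg (by decide)

lemma Tm_sphere {ε : ℝ} (b c : Fin 2) {z : ℝ × ℝ} (h : ‖z‖ = ε) : Tm ε b z = Tm ε c z := by
  rcases fin2_eq b with rfl | rfl <;> rcases fin2_eq c with rfl | rfl <;>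
    simp only [Tm_zero_def, Tm_one_def, h]

lemma norm_Tm_zero {ε : ℝ} {z : ℝ × ℝ} (hz : z ≠ 0) : ‖Tm ε 0 z‖ = ‖z‖⁻¹ := by
  have h : ‖z‖ ≠ 0 := norm_ne_zero_iff.mpr hz
  rw [Tm_zero_def, norm_smul, Real.norm_eq_abs, abs_of_nonneg (by positivity)]
  field_simp

lemma norm_Tm_one {ε : ℝ} (hε : 0 < ε) (z : ℝ × ℝ) : ‖Tm ε 1 z‖ = ‖z‖ / ε ^ 2 := by
  rw [Tm_one_def, norm_smul, Real.norm_eq_abs, abs_of_nonneg (by positivity)]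
  rw [div_eq_mul_inv, mul_comm]

lemma Tm_one_inj {ε : ℝ} (hε : 0 < ε) {z y : ℝ × ℝ} (h : Tm ε 1 z = Tm ε 1 y) : z = y := by
  rw [Tm_one_def, Tm_one_def] at h
  exact smul_right_injective _ (by positivity : ((ε:ℝ) ^ 2)⁻¹ ≠ 0) h

lemma Tm_inj_01 {ε : ℝ} (hε : 0 < ε) {z y : ℝ × ℝ}
    (hz : ε ≤ ‖z‖) (hy : ε ≤ ‖y‖) (h : Tm ε 0 z = Tm ε 1 y) :
    z = y ∧ ‖z‖ = ε := by
  have hz0 : z ≠ 0 := fun hc => by rw [hc, norm_zero] at hz; linarith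
  have hzn : (0:ℝ) < ‖z‖ := lt_of_lt_of_le hε hz
  have hnorm := congrArg norm h
  rw [norm_Tm_zero hz0, norm_Tm_one hε] at hnorm
  have hab : ‖z‖ * ‖y‖ = ε ^ 2 := by
    field_simp at hnorm
    nlinarith [hnorm]
  have ha : ‖z‖ = ε := by
    nlinarith [mul_nonneg (le_of_lt hzn) (sub_nonneg.mpr hy)]
  refine ⟨?_, ha⟩
  apply Tm_one_inj hε
  rw [← Tm_sphere 0 1 ha]
  exact h

lemma Tm_inj {ε : ℝ} (hε : 0 < ε) {b c : Fin 2} {z y : ℝ × ℝ}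
    (hz : ε ≤ ‖z‖) (hy : ε ≤ ‖y‖) (h : Tm ε b z = Tm ε c y) :
    z = y ∧ (b = c ∨ ‖z‖ = ε) := by
  have hz0 : z ≠ 0 := fun hc => by rw [hc, norm_zero] at hz; linarith
  have hy0 : y ≠ 0 := fun hc => by rw [hc, norm_zero] at hy; linarith
  rcases fin2_eq b with rfl | rfl <;> rcases fin2_eq c with rfl | rfl
  · have hnorm := congrArg norm h
    rw [norm_Tm_zero hz0, norm_Tm_zero hy0] at hnorm
    have hne : ‖z‖ = ‖y‖ := inv_injective hnorm
    refine ⟨?_, Or.inl rfl⟩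
    rw [Tm_zero_def, Tm_zero_def, hne] at h
    have hy2 : ((‖y‖:ℝ) ^ 2)⁻¹ ≠ 0 := by
      have : (0:ℝ) < ‖y‖ := lt_of_lt_of_le hε hy
      positivity
    exact smul_right_injective _ hy2 h
  · obtain ⟨h1, h2⟩ := Tm_inj_01 hε hz hy h
    exact ⟨h1, Or.inr h2⟩
  · obtain ⟨h1, h2⟩ := Tm_inj_01 hε hy hz h.symm
    exact ⟨h1.symm, Or.inr (h1 ▸ h2)⟩
  · exact ⟨Tm_one_inj hε h, Or.inl rfl⟩

lemma Tm_cont {ε : ℝ} (b : Fin 2) {f : ℝ → ℝ × ℝ} (hf : Continuous f) (h0 : ∀ t, f t ≠ 0) :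
    Continuous (fun t => Tm ε b (f t)) := by
  unfold Tm
  split
  · exact Continuous.smul ((hf.norm.pow 2).inv₀
      (fun t => pow_ne_zero _ (norm_ne_zero_iff.mpr (h0 t)))) hf
  · exact (continuous_const : Continuous fun _ : ℝ => ((ε ^ 2)⁻¹ : ℝ)).smul hf

variable {n : ℕ}

/-- two copies of G∖w plus matching edges toward neighbours of w -/
def lift (G : SimpleGraph (Fin (n+1))) : SimpleGraph (Fin n × Fin 2) where
  Adj x y := (x.2 = y.2 ∧ G.Adj x.1.castSucc y.1.castSucc) ∨
             (x.1 = y.1 ∧ x.2 ≠ y.2 ∧ G.Adj x.1.castSucc (Fin.last n))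
  symm := by
    refine ⟨?_⟩
    rintro x y (⟨h1, h2⟩ | ⟨h1, h2, h3⟩)
    · exact Or.inl ⟨h1.symm, h2.symm⟩
    · exact Or.inr ⟨h1.symm, h2.symm, h1 ▸ h3⟩
  loopless := by
    refine ⟨?_⟩
    rintro x (⟨h1, h2⟩ | ⟨h1, h2, h3⟩)
    · exact G.irrefl h2
    · exact h2 rfl

lemma lift_le (G : SimpleGraph (Fin (n+1))) :
    lift G ≤ (⊤ : SimpleGraph (Fin n)) □ pathGraph 2 := by
  rintro x y (⟨h1, h2⟩ | ⟨h1, h2, h3⟩)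
  · rw [boxProd_adj]
    exact Or.inl ⟨by simpa using fun h => G.irrefl (h ▸ h2), h1⟩
  · rw [boxProd_adj, pathGraph_two_eq_top]
    exact Or.inr ⟨by simpa using h2, h1⟩

lemma mem_lift_iff_copy (G : SimpleGraph (Fin (n+1))) {x y : Fin n × Fin 2}
    (h1 : x.1 ≠ y.1) (h2 : x.2 = y.2) :
    s(x, y) ∈ (lift G).edgeSet ↔ s(x.1.castSucc, y.1.castSucc) ∈ G.edgeSet := by
  simp only [mem_edgeSet, lift]
  constructor
  · rintro (⟨_, h⟩ | ⟨h, _, _⟩)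
    · exact h
    · exact absurd h h1
  · exact fun h => Or.inl ⟨h2, h⟩

lemma mem_lift_iff_match (G : SimpleGraph (Fin (n+1))) {x y : Fin n × Fin 2}
    (h1 : x.1 = y.1) (h2 : x.2 ≠ y.2) :
    s(x, y) ∈ (lift G).edgeSet ↔ s(x.1.castSucc, Fin.last n) ∈ G.edgeSet := by
  simp only [mem_edgeSet, lift]
  constructor
  · rintro (⟨h, _⟩ | ⟨_, _, h⟩)
    · exact absurd h h2
    · exact h
  · exact fun h => Or.inr ⟨h1, h2, h⟩

lemma lift_planar (G : SimpleGraph (Fin (n+1))) (hG : G.IsPlanar) :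
    (lift G).IsPlanar := by
  classical
  obtain ⟨P, A, hPinj, hAcont, hAinj, hAend, hAvert, hAcross⟩ := hG
  set wl : Fin (n+1) := Fin.last n with hwl
  set Q : Fin (n+1) → ℝ × ℝ := fun u => P u - P wl with hQ
  set B : G.edgeSet → ℝ → ℝ × ℝ := fun e t => A e (cl t) - P wl with hB
  have hQinj : Function.Injective Q := fun a b hab => hPinj (sub_left_inj.mp hab)
  have hQwl : Q wl = 0 := sub_self _
  have hQne : ∀ u, u ≠ wl → Q u ≠ 0 := fun u hu hc => hu (hQinj (by rw [hc, hQwl]))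
  have hBcont : ∀ e, Continuous (B e) :=
    fun e => ((hAcont e).comp continuous_cl).sub continuous_const
  have hBInj : ∀ e, Set.InjOn (B e) (Icc 0 1) := by
    intro e s hs t ht hst
    have h1 : A e (cl s) = A e (cl t) := by
      have : A e (cl s) - P wl = A e (cl t) - P wl := hst
      exact sub_left_inj.mp this
    rw [cl_of_mem hs, cl_of_mem ht] at h1
    exact hAinj e hs ht h1
  have hBmem : ∀ (e : G.edgeSet) (t : ℝ), A e (cl t) ∈ A e '' Icc 0 1 :=
    fun e t => ⟨cl t, cl_mem t, rfl⟩
  have hBvert : ∀ (e : G.edgeSet) z (t : ℝ), B e t = Q z → z ∈ (e : Sym2 (Fin (n+1))) := by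
    intro e z t h
    apply hAvert e z
    have h2 : A e (cl t) = P z := by
      have : A e (cl t) - P wl = P z - P wl := h
      exact sub_left_inj.mp this
    exact h2 ▸ hBmem e t
  have hBcross : ∀ (e f : G.edgeSet), e ≠ f → ∀ (s t : ℝ), B e s = B f t →
      ∃ z, z ∈ (e : Sym2 (Fin (n+1))) ∧ z ∈ (f : Sym2 (Fin (n+1))) ∧ B e s = Q z := by
    intro e f hef s t h
    have h' : A e (cl s) = A f (cl t) := by
      have : A e (cl s) - P wl = A f (cl t) - P wl := h
      exact sub_left_inj.mp this
    obtain ⟨z, hz⟩ := hAcross e f hef (A e (cl s)) ⟨hBmem e s, h' ▸ hBmem f t⟩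
    refine ⟨z, hAvert e z (by rw [hz]; exact hBmem e s), hAvert f z ?_, ?_⟩
    · have hz2 : P z = A f (cl t) := by rw [hz, h']
      rw [hz2]; exact hBmem f t
    · show A e (cl s) - P wl = P z - P wl
      rw [hz]
  have hBend : ∀ e : G.edgeSet, ∃ u v, (e : Sym2 (Fin (n+1))) = s(u, v) ∧
      B e 0 = Q u ∧ B e 1 = Q v := by
    intro e
    obtain ⟨u, v, h1, h2, h3⟩ := hAend e
    exact ⟨u, v, h1, by show A e (cl 0) - P wl = P u - P wl; rw [cl_zero, h2],
      by show A e (cl 1) - P wl = P v - P wl; rw [cl_one, h3]⟩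
  -- the compact set bounding everything away from the hub
  set K : Set (ℝ × ℝ) := insert (1, 0) ((Q '' {u | u ≠ wl}) ∪
      ⋃ e : {e : G.edgeSet // wl ∉ (e : Sym2 (Fin (n+1)))}, B e.1 '' Icc 0 1) with hK
  have hKcpt : IsCompact K := by
    apply IsCompact.insert
    apply IsCompact.union
    · exact (Set.toFinite _).isCompact
    · exact isCompact_iUnion (fun e => isCompact_Icc.image (hBcont e.1))
  have hKne : K.Nonempty := ⟨_, mem_insert _ _⟩
  have hK0 : (0 : ℝ × ℝ) ∉ K := by
    intro h0
    rcases mem_insert_iff.mp h0 with h | h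
    · have := congrArg Prod.fst h
      norm_num at this
    rcases h with h | h
    · obtain ⟨u, hu, hQu⟩ := h
      exact hQne u hu hQu
    · obtain ⟨e, hmem⟩ := mem_iUnion.mp h
      obtain ⟨t, ht, hBt⟩ := hmem
      have : B e.1 t = Q wl := by rw [hQwl]; exact hBt
      exact e.2 (hBvert e.1 wl t this)
  set d : ℝ := Metric.infDist 0 K with hd
  have hdpos : 0 < d := (hKcpt.isClosed.notMem_iff_infDist_pos hKne).mp hK0
  have hdle : ∀ x ∈ K, d ≤ ‖x‖ := fun x hx => by
    simpa [dist_zero_left] using Metric.infDist_le_dist_of_mem (x := (0:ℝ×ℝ)) hx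
  set ε : ℝ := d / 2 with hε'
  have hεpos : 0 < ε := by positivity
  have hεd : ε < d := by simp only [hε']; linarith
  have hQcs : ∀ u : Fin n, ε < ‖Q u.castSucc‖ := by
    intro u
    have hm : Q u.castSucc ∈ K :=
      mem_insert_of_mem _ (Or.inl ⟨u.castSucc, (Fin.castSucc_lt_last u).ne, rfl⟩)
    exact lt_of_lt_of_le hεd (hdle _ hm)
  have hBK : ∀ (e : G.edgeSet), wl ∉ (e : Sym2 (Fin (n+1))) → ∀ t : ℝ, ε < ‖B e t‖ := by
    intro e he t
    have himg : B e t ∈ B e '' Icc 0 1 := ⟨cl t, cl_mem t, by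
      show A e (cl (cl t)) - P wl = A e (cl t) - P wl
      rw [cl_of_mem (cl_mem t)]⟩
    have hm : B e t ∈ K := mem_insert_of_mem _ (Or.inr (mem_iUnion.mpr ⟨⟨e, he⟩, himg⟩))
    exact lt_of_lt_of_le hεd (hdle _ hm)
  -- choose representatives of the new edges
  have hrep : ∀ e : Sym2 (Fin n × Fin 2),
      ∃ xy : (Fin n × Fin 2) × (Fin n × Fin 2), e = s(xy.1, xy.2) :=
    fun e => Sym2.ind (fun a b => ⟨(a, b), rfl⟩) e
  set xx : (lift G).edgeSet → Fin n × Fin 2 := fun e => (hrep e.1).choose.1 with hxx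
  set yy : (lift G).edgeSet → Fin n × Fin 2 := fun e => (hrep e.1).choose.2 with hyy
  have hxy : ∀ e : (lift G).edgeSet, (e : Sym2 (Fin n × Fin 2)) = s(xx e, yy e) :=
    fun e => (hrep e.1).choose_spec
  have hadj : ∀ e : (lift G).edgeSet, (lift G).Adj (xx e) (yy e) :=
    fun e => (SimpleGraph.mem_edgeSet _).mp (hxy e ▸ e.2)
  -- the original edge corresponding to each new edge
  have hoe : ∀ e : (lift G).edgeSet, ∃ oe : G.edgeSet,
      (((xx e).2 = (yy e).2 ∧
        (oe : Sym2 (Fin (n+1))) = s((xx e).1.castSucc, (yy e).1.castSucc) ∧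
        wl ∉ (oe : Sym2 (Fin (n+1)))) ∨
       ((xx e).2 ≠ (yy e).2 ∧ (xx e).1 = (yy e).1 ∧
        (oe : Sym2 (Fin (n+1))) = s((xx e).1.castSucc, wl) ∧
        wl ∈ (oe : Sym2 (Fin (n+1))))) := by
    intro e
    rcases hadj e with ⟨h1, h2⟩ | ⟨h1, h2, h3⟩
    · refine ⟨⟨s((xx e).1.castSucc, (yy e).1.castSucc), h2⟩, Or.inl ⟨h1, rfl, ?_⟩⟩
      rw [Sym2.mem_iff]
      push_neg
      exact ⟨(Fin.castSucc_lt_last _).ne', (Fin.castSucc_lt_last _).ne'⟩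
    · exact ⟨⟨s((xx e).1.castSucc, wl), h3⟩, Or.inr ⟨h2, h1, rfl,
        Sym2.mem_iff.mpr (Or.inr rfl)⟩⟩
  set oe : (lift G).edgeSet → G.edgeSet := fun e => (hoe e).choose with hoedef
  have hoespec := fun e => (hoe e).choose_spec
  have hoe_copy : ∀ e : (lift G).edgeSet, (xx e).2 = (yy e).2 →
      ((oe e : Sym2 (Fin (n+1))) = s((xx e).1.castSucc, (yy e).1.castSucc) ∧
       wl ∉ (oe e : Sym2 (Fin (n+1)))) := by
    intro e h
    rcases hoespec e with ⟨_, h2, h3⟩ | ⟨h1, _⟩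
    · exact ⟨h2, h3⟩
    · exact absurd h h1
  have hoe_match : ∀ e : (lift G).edgeSet, (xx e).2 ≠ (yy e).2 →
      ((xx e).1 = (yy e).1 ∧ (oe e : Sym2 (Fin (n+1))) = s((xx e).1.castSucc, wl) ∧
       wl ∈ (oe e : Sym2 (Fin (n+1)))) := by
    intro e h
    rcases hoespec e with ⟨h1, _⟩ | ⟨_, h2, h3, h4⟩
    · exact absurd h1 h
    · exact ⟨h2, h3, h4⟩
  -- the oriented arc for matching edges (goes from the vertex toward the hub)
  set av : (lift G).edgeSet → ℝ → ℝ × ℝ := fun e t =>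
    if B (oe e) 0 = Q (xx e).1.castSucc then B (oe e) t else B (oe e) (1 - t) with hav
  have havim : ∀ e (t : ℝ), ∃ s : ℝ, av e t = B (oe e) s := by
    intro e t
    simp only [hav]
    split
    · exact ⟨t, rfl⟩
    · exact ⟨1 - t, rfl⟩
  have havcont : ∀ e, Continuous (av e) := by
    intro e
    simp only [hav]
    split
    · exact hBcont _
    · exact (hBcont _).comp (continuous_const.sub continuous_id)
  have havinj : ∀ e, Set.InjOn (av e) (Icc 0 1) := by
    intro e
    simp only [hav]
    split
    · exact hBInj _
    · intro s hs t ht h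
      have h1 : (1:ℝ) - s ∈ Icc (0:ℝ) 1 := ⟨by linarith [hs.2], by linarith [hs.1]⟩
      have h2 : (1:ℝ) - t ∈ Icc (0:ℝ) 1 := ⟨by linarith [ht.2], by linarith [ht.1]⟩
      have := hBInj (oe e) h1 h2 h
      linarith
  have havm : ∀ e : (lift G).edgeSet, (xx e).2 ≠ (yy e).2 →
      av e 0 = Q (xx e).1.castSucc ∧ av e 1 = 0 := by
    intro e hne
    obtain ⟨-, h2, -⟩ := hoe_match e hne
    obtain ⟨u, v', he, hb0, hb1⟩ := hBend (oe e)
    rw [h2] at he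
    have hcs : (xx e).1.castSucc ≠ wl := (Fin.castSucc_lt_last _).ne
    rcases Sym2.eq_iff.mp he.symm with ⟨hu, hv⟩ | ⟨hu, hv⟩
    · -- u = castSucc, v' = wl
      have hcond : B (oe e) 0 = Q (xx e).1.castSucc := by rw [hb0, hu]
      simp only [hav, if_pos hcond]
      exact ⟨hcond, by rw [hb1, hv, hQwl]⟩
    · -- u = wl, v' = castSucc
      have hcond : ¬ (B (oe e) 0 = Q (xx e).1.castSucc) := by
        rw [hb0, hu, hQwl]
        exact fun hc => (hQne _ hcs) hc.symm
      simp only [hav, if_neg hcond]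
      constructor
      · rw [show (1:ℝ) - 0 = 1 by norm_num, hb1, hv]
      · rw [sub_self, hb0, hu, hQwl]
  -- first hitting parameter of the small sphere
  set st : (lift G).edgeSet → ℝ := fun e =>
    sInf (Icc (0:ℝ) 1 ∩ {t | ‖av e t‖ ≤ ε}) with hstdef
  have hstm : ∀ e : (lift G).edgeSet, (xx e).2 ≠ (yy e).2 →
      st e ∈ Icc (0:ℝ) 1 ∧ ‖av e (st e)‖ = ε ∧ 0 < st e ∧
      (∀ t, 0 ≤ t → t < st e → ε < ‖av e t‖) := by
    intro e hne
    obtain ⟨hav0, hav1⟩ := havm e hne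
    set S := Icc (0:ℝ) 1 ∩ {t | ‖av e t‖ ≤ ε} with hS
    have hScl : IsClosed S :=
      isClosed_Icc.inter (isClosed_le (havcont e).norm continuous_const)
    have hSne : S.Nonempty := ⟨1, ⟨by norm_num, by
      show ‖av e 1‖ ≤ ε
      rw [hav1, norm_zero]
      exact le_of_lt hεpos⟩⟩
    have hSbdd : BddBelow S := ⟨0, fun t ht => ht.1.1⟩
    have hmem := hScl.csInf_mem hSne hSbdd
    have h1 : st e ∈ Icc (0:ℝ) 1 := hmem.1
    have hlb : ∀ t, 0 ≤ t → t < st e → ε < ‖av e t‖ := by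
      intro t ht0 htlt
      by_contra hcon
      push_neg at hcon
      have hle : st e ≤ t := csInf_le hSbdd ⟨⟨ht0, le_trans (le_of_lt htlt) h1.2⟩, hcon⟩
      linarith
    have hstpos : 0 < st e := by
      rcases lt_or_eq_of_le h1.1 with h | h
      · exact h
      · exfalso
        have h2 : ‖av e (st e)‖ ≤ ε := hmem.2
        rw [← h, hav0] at h2
        exact absurd h2 (not_le.mpr (hQcs _))
    have hmem2 : ‖av e (st e)‖ ≤ ε := hmem.2
    have hnorm : ‖av e (st e)‖ = ε := by
      rcases lt_or_eq_of_le hmem2 with hlt | heq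
      · exfalso
        have hc : ContinuousAt (fun t => ‖av e t‖) (st e) := (havcont e).norm.continuousAt
        obtain ⟨δ, hδpos, hδ⟩ := Metric.continuousAt_iff.mp hc (ε - ‖av e (st e)‖) (by linarith)
        set t := max 0 (st e - δ/2) with htdef
        have ht0 : 0 ≤ t := le_max_left _ _
        have htlt : t < st e := max_lt hstpos (by linarith)
        have hdist : dist t (st e) < δ := by
          rw [Real.dist_eq, abs_of_nonpos (by linarith)]
          have : st e - δ/2 ≤ t := le_max_right _ _
          linarith
        have h3 := hδ hdist
        rw [Real.dist_eq] at h3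
        have h4 : ‖av e t‖ < ε := by
          rcases abs_lt.mp h3 with ⟨h5, h6⟩
          linarith
        exact absurd h4 (not_lt.mpr (le_of_lt (hlb t ht0 htlt)))
      · exact heq
    exact ⟨h1, hnorm, hstpos, hlb⟩
  -- the new drawing
  set pos : Fin n × Fin 2 → ℝ × ℝ := fun x => Tm ε x.2 (Q x.1.castSucc) with hpos
  set τ : (lift G).edgeSet → ℝ → ℝ := fun e t => st e * (1 - |2 * cl t - 1|) with hτ
  have hτmem : ∀ e (t : ℝ), 0 ≤ st e → τ e t ∈ Icc 0 (st e) := by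
    intro e t hst0
    have h1 := cl_mem t
    have h2 : |2 * cl t - 1| ≤ 1 := abs_le.mpr ⟨by linarith [h1.1], by linarith [h1.2]⟩
    have h3 : 0 ≤ |2 * cl t - 1| := abs_nonneg _
    constructor
    · exact mul_nonneg hst0 (by linarith)
    · calc st e * (1 - |2 * cl t - 1|) ≤ st e * 1 := by
            apply mul_le_mul_of_nonneg_left (by linarith) hst0
      _ = st e := mul_one _
  have hτε : ∀ e (t : ℝ), (xx e).2 ≠ (yy e).2 → ε ≤ ‖av e (τ e t)‖ := by
    intro e t hne
    obtain ⟨h1, h2, h3, h4⟩ := hstm e hne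
    obtain ⟨hm1, hm2⟩ := hτmem e t (le_of_lt h3)
    rcases lt_or_eq_of_le hm2 with h | h
    · exact le_of_lt (h4 _ hm1 h)
    · rw [h, h2]
  set arc : (lift G).edgeSet → ℝ → ℝ × ℝ := fun e t =>
    if (xx e).2 = (yy e).2 then Tm ε (xx e).2 (B (oe e) t)
    else if t ≤ 1/2 then Tm ε (xx e).2 (av e (τ e t))
         else Tm ε (yy e).2 (av e (τ e t)) with harc
  refine ⟨pos, arc, ?_, ?_, ?_, ?_, ?_, ?_⟩
  · -- injectivity of pos
    intro a b hab
    obtain ⟨h1, h2⟩ := Tm_inj hεpos (le_of_lt (hQcs a.1)) (le_of_lt (hQcs b.1)) hab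
    have ha1 : a.1 = b.1 := Fin.castSucc_injective _ (hQinj h1)
    rcases h2 with h2 | h2
    · exact Prod.ext ha1 h2
    · exact absurd h2 (ne_of_gt (hQcs a.1))
  · -- continuity
    intro e
    simp only [harc]
    by_cases hc : (xx e).2 = (yy e).2
    · simp only [if_pos hc]
      have h0 : ∀ t, B (oe e) t ≠ 0 := by
        intro t hz
        have hb := hBK (oe e) (hoe_copy e hc).2 t
        rw [hz, norm_zero] at hb
        linarith
      exact Tm_cont _ (hBcont _) h0
    · simp only [if_neg hc]
      have hτcont : Continuous (τ e) := by
        simp only [hτ]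
        exact continuous_const.mul (continuous_const.sub
          (((continuous_const.mul continuous_cl).sub continuous_const).abs))
      have h0 : ∀ t, av e (τ e t) ≠ 0 := by
        intro t hz
        have hb := hτε e t hc
        rw [hz, norm_zero] at hb
        linarith
      refine Continuous.if_le (Tm_cont _ ((havcont e).comp hτcont) h0)
        (Tm_cont _ ((havcont e).comp hτcont) h0) continuous_id continuous_const ?_
      intro t ht
      have hτhalf : τ e t = st e := by
        simp only [hτ]
        rw [show cl t = 1/2 by rw [ht]; exact cl_of_mem (by norm_num)]
        norm_num
      exact Tm_sphere _ _ (by rw [hτhalf]; exact (hstm e hc).2.1)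
  · -- injectivity on Icc
    intro e s hs t ht hst
    simp only [harc] at hst
    by_cases hc : (xx e).2 = (yy e).2
    · simp only [if_pos hc] at hst
      have hε1 : ε ≤ ‖B (oe e) s‖ := le_of_lt (hBK _ (hoe_copy e hc).2 s)
      have hε2 : ε ≤ ‖B (oe e) t‖ := le_of_lt (hBK _ (hoe_copy e hc).2 t)
      exact hBInj (oe e) hs ht (Tm_inj hεpos hε1 hε2 hst).1
    · simp only [if_neg hc] at hst
      obtain ⟨hIcc, hnrm, hstpos, hlb⟩ := hstm e hc
      have hτI : ∀ r, τ e r ∈ Icc (0:ℝ) 1 := fun r =>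
        ⟨(hτmem e r (le_of_lt hstpos)).1,
         le_trans (hτmem e r (le_of_lt hstpos)).2 hIcc.2⟩
      have hτlow : ∀ r, r ∈ Icc (0:ℝ) 1 → r ≤ 1/2 → τ e r = st e * (2*r) := by
        intro r hr hr2
        simp only [hτ]
        rw [cl_of_mem hr, abs_of_nonpos (by linarith)]
        ring
      have hτhigh : ∀ r, r ∈ Icc (0:ℝ) 1 → 1/2 ≤ r → τ e r = st e * (2 - 2*r) := by
        intro r hr hr2
        simp only [hτ]
        rw [cl_of_mem hr, abs_of_nonneg (by linarith)]
        ring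
      have hsplit : ∀ r, r ∈ Icc (0:ℝ) 1 → ‖av e (τ e r)‖ = ε → τ e r = st e := by
        intro r hr hnr
        rcases lt_or_eq_of_le (hτmem e r (le_of_lt hstpos)).2 with hlt | heq
        · exact absurd hnr (ne_of_gt (hlb _ (hτmem e r (le_of_lt hstpos)).1 hlt))
        · exact heq
      rcases le_or_gt s (1/2) with hs2 | hs2 <;> rcases le_or_gt t (1/2) with ht2 | ht2
      · simp only [if_pos hs2, if_pos ht2] at hst
        obtain ⟨hval, -⟩ := Tm_inj hεpos (hτε e s hc) (hτε e t hc) hst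
        have h5 := havinj e (hτI s) (hτI t) hval
        rw [hτlow s hs hs2, hτlow t ht ht2] at h5
        have := mul_left_cancel₀ (ne_of_gt hstpos) h5
        linarith
      · simp only [if_pos hs2, if_neg (not_le.mpr ht2)] at hst
        obtain ⟨hval, hbc⟩ := Tm_inj hεpos (hτε e s hc) (hτε e t hc) hst
        rcases hbc with hbc | hbc
        · exact absurd hbc hc
        have h5 := havinj e (hτI s) (hτI t) hval
        have h6 : τ e s = st e := hsplit s hs hbc
        have h7 : τ e t = st e := by rw [← h5]; exact h6
        rw [hτhigh t ht (le_of_lt ht2)] at h7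
        have h8 : (2:ℝ) - 2*t = 1 := mul_left_cancel₀ (ne_of_gt hstpos) (by rw [h7]; ring)
        linarith
      · simp only [if_neg (not_le.mpr hs2), if_pos ht2] at hst
        obtain ⟨hval, hbc⟩ := Tm_inj hεpos (hτε e s hc) (hτε e t hc) hst
        rcases hbc with hbc | hbc
        · exact absurd hbc.symm hc
        have h5 := havinj e (hτI s) (hτI t) hval
        have h6 : τ e s = st e := hsplit s hs hbc
        rw [hτhigh s hs (le_of_lt hs2)] at h6
        have h8 : (2:ℝ) - 2*s = 1 := mul_left_cancel₀ (ne_of_gt hstpos) (by rw [h6]; ring)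
        linarith
      · simp only [if_neg (not_le.mpr hs2), if_neg (not_le.mpr ht2)] at hst
        obtain ⟨hval, -⟩ := Tm_inj hεpos (hτε e s hc) (hτε e t hc) hst
        have h5 := havinj e (hτI s) (hτI t) hval
        rw [hτhigh s hs (le_of_lt hs2), hτhigh t ht (le_of_lt ht2)] at h5
        have := mul_left_cancel₀ (ne_of_gt hstpos) h5
        linarith
  · -- endpoints
    intro e
    by_cases hc : (xx e).2 = (yy e).2
    · obtain ⟨hoeq, hnw⟩ := hoe_copy e hc
      obtain ⟨u, v', he, hb0, hb1⟩ := hBend (oe e)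
      have harc0 : arc e 0 = Tm ε (xx e).2 (B (oe e) 0) := by simp only [harc, if_pos hc]
      have harc1 : arc e 1 = Tm ε (xx e).2 (B (oe e) 1) := by simp only [harc, if_pos hc]
      rcases Sym2.eq_iff.mp (hoeq.symm.trans he) with ⟨h1, h2⟩ | ⟨h1, h2⟩
      · refine ⟨xx e, yy e, hxy e, ?_, ?_⟩
        · rw [harc0, hb0, ← h1]
        · show arc e 1 = Tm ε (yy e).2 (Q (yy e).1.castSucc)
          rw [harc1, hb1, ← h2, hc]
      · refine ⟨yy e, xx e, (hxy e).trans (Sym2.eq_swap), ?_, ?_⟩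
        · show arc e 0 = Tm ε (yy e).2 (Q (yy e).1.castSucc)
          rw [harc0, hb0, ← h2, hc]
        · show arc e 1 = Tm ε (xx e).2 (Q (xx e).1.castSucc)
          rw [harc1, hb1, ← h1]
    · obtain ⟨hv1, -, -⟩ := hoe_match e hc
      obtain ⟨hav0, hav1⟩ := havm e hc
      have hτ0 : τ e 0 = 0 := by
        simp only [hτ, cl_zero]
        norm_num
      have hτ1 : τ e 1 = 0 := by
        simp only [hτ, cl_one]
        norm_num
      refine ⟨xx e, yy e, hxy e, ?_, ?_⟩
      · have h0 : arc e 0 = Tm ε (xx e).2 (av e (τ e 0)) := by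
          simp only [harc, if_neg hc, if_pos (by norm_num : (0:ℝ) ≤ 1/2)]
        rw [h0, hτ0, hav0]
      · have h1 : arc e 1 = Tm ε (yy e).2 (av e (τ e 1)) := by
          simp only [harc, if_neg hc, if_neg (by norm_num : ¬ ((1:ℝ) ≤ 1/2))]
        show arc e 1 = Tm ε (yy e).2 (Q (yy e).1.castSucc)
        rw [h1, hτ1, hav0, hv1]
  · -- arcs avoid other vertices
    rintro e z ⟨t, htI, hzt⟩
    by_cases hc : (xx e).2 = (yy e).2
    · simp only [harc, if_pos hc] at hzt
      obtain ⟨hoeq, hnw⟩ := hoe_copy e hc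
      obtain ⟨hval, hbc⟩ := Tm_inj hεpos (le_of_lt (hBK _ hnw t)) (le_of_lt (hQcs z.1)) hzt
      have hz1 : z.1.castSucc ∈ (oe e : Sym2 (Fin (n+1))) := hBvert _ _ t hval
      rw [hoeq, Sym2.mem_iff] at hz1
      have hz2 : z.2 = (xx e).2 := by
        rcases hbc with h | h
        · exact h.symm
        · exact absurd h (ne_of_gt (hBK _ hnw t))
      rw [hxy e, Sym2.mem_iff]
      rcases hz1 with h | h
      · exact Or.inl (Prod.ext (Fin.castSucc_injective _ h) hz2)
      · exact Or.inr (Prod.ext (Fin.castSucc_injective _ h) (hz2.trans hc))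
    · obtain ⟨hv1, hoeq, -⟩ := hoe_match e hc
      have key : ∀ b : Fin 2, Tm ε b (av e (τ e t)) = pos z →
          z.1 = (xx e).1 ∧ z.2 = b := by
        intro b hb
        obtain ⟨hval, hbc⟩ := Tm_inj hεpos (hτε e t hc) (le_of_lt (hQcs z.1)) hb
        obtain ⟨s', hs'⟩ := havim e (τ e t)
        have hz1 : z.1.castSucc ∈ (oe e : Sym2 (Fin (n+1))) :=
          hBvert _ _ s' (by rw [← hs', hval])
        rw [hoeq, Sym2.mem_iff] at hz1
        have hz2 : z.2 = b := by
          rcases hbc with h | h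
          · exact h.symm
          · exfalso
            rw [hval] at h
            exact (ne_of_gt (hQcs z.1)) h
        rcases hz1 with h | h
        · exact ⟨Fin.castSucc_injective _ h, hz2⟩
        · exact absurd h (Fin.castSucc_lt_last _).ne
      rw [hxy e, Sym2.mem_iff]
      by_cases ht2 : t ≤ 1/2
      · simp only [harc, if_neg hc, if_pos ht2] at hzt
        obtain ⟨h1, h2⟩ := key _ hzt
        exact Or.inl (Prod.ext h1 h2)
      · simp only [harc, if_neg hc, if_neg ht2] at hzt
        obtain ⟨h1, h2⟩ := key _ hzt
        exact Or.inr (Prod.ext (h1.trans hv1) h2)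
  · -- distinct arcs meet only at vertices
    rintro e f hef p ⟨⟨se, hseI, hse⟩, ⟨sf, hsfI, hsf⟩⟩
    have hform : ∀ (g : (lift G).edgeSet) (r : ℝ), ∃ (b : Fin 2) (σ : ℝ),
        arc g r = Tm ε b (B (oe g) σ) ∧ ε ≤ ‖B (oe g) σ‖ ∧
        ((b = (xx g).2 ∧ (xx g).2 = (yy g).2) ∨
         (b = (xx g).2 ∨ b = (yy g).2) ∧ (xx g).2 ≠ (yy g).2) := by
      intro g r
      by_cases hc : (xx g).2 = (yy g).2
      · exact ⟨(xx g).2, r, by simp only [harc, if_pos hc],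
          le_of_lt (hBK _ (hoe_copy g hc).2 r), Or.inl ⟨rfl, hc⟩⟩
      · obtain ⟨σ, hσ⟩ := havim g (τ g r)
        by_cases hr2 : r ≤ 1/2
        · exact ⟨(xx g).2, σ, by simp only [harc, if_neg hc, if_pos hr2, hσ],
            by rw [← hσ]; exact hτε g r hc, Or.inr ⟨Or.inl rfl, hc⟩⟩
        · exact ⟨(yy g).2, σ, by simp only [harc, if_neg hc, if_neg hr2, hσ],
            by rw [← hσ]; exact hτε g r hc, Or.inr ⟨Or.inr rfl, hc⟩⟩
    obtain ⟨be, σe, he1, he3, he4⟩ := hform e se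
    obtain ⟨bf, σf, hf1, hf3, hf4⟩ := hform f sf
    have heq : Tm ε be (B (oe e) σe) = Tm ε bf (B (oe f) σf) := by
      rw [← he1, ← hf1, hse, hsf]
    obtain ⟨hval, hbc⟩ := Tm_inj hεpos he3 hf3 heq
    by_cases hoef : oe e = oe f
    · -- then the new edges must coincide: contradiction
      exfalso
      apply hef
      have hoefs : (oe e : Sym2 (Fin (n+1))) = (oe f : Sym2 (Fin (n+1))) := by rw [hoef]
      apply Subtype.ext
      rw [hxy e, hxy f]
      by_cases hce : (xx e).2 = (yy e).2 <;> by_cases hcf : (xx f).2 = (yy f).2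
      · -- copy / copy
        obtain ⟨hoeqe, hnwe⟩ := hoe_copy e hce
        obtain ⟨hoeqf, hnwf⟩ := hoe_copy f hcf
        have hbl : be = bf := by
          rcases hbc with h | h
          · exact h
          · exact absurd h (ne_of_gt (hBK _ hnwe σe))
        have hbex : be = (xx e).2 := by
          rcases he4 with ⟨h1, -⟩ | ⟨-, h⟩
          · exact h1
          · exact absurd hce h
        have hbfx : bf = (xx f).2 := by
          rcases hf4 with ⟨h1, -⟩ | ⟨-, h⟩
          · exact h1
          · exact absurd hcf h
        have hlev : (xx e).2 = (xx f).2 := by rw [← hbex, ← hbfx, hbl]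
        have hs2 := hoeqe.symm.trans (hoefs.trans hoeqf)
        rcases Sym2.eq_iff.mp hs2 with ⟨h1, h2⟩ | ⟨h1, h2⟩
        · rw [Sym2.eq_iff]
          left
          constructor
          · exact Prod.ext (Fin.castSucc_injective _ h1) hlev
          · exact Prod.ext (Fin.castSucc_injective _ h2) ((hce.symm.trans hlev).trans hcf)
        · rw [Sym2.eq_iff]
          right
          constructor
          · exact Prod.ext (Fin.castSucc_injective _ h1) (hlev.trans hcf)
          · exact Prod.ext (Fin.castSucc_injective _ h2) (hce.symm.trans hlev)
      · -- copy / match : impossible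
        obtain ⟨-, hnwe⟩ := hoe_copy e hce
        obtain ⟨-, -, hwf⟩ := hoe_match f hcf
        rw [← hoefs] at hwf
        exact absurd hwf hnwe
      · obtain ⟨-, hnwf⟩ := hoe_copy f hcf
        obtain ⟨-, -, hwe⟩ := hoe_match e hce
        rw [hoefs] at hwe
        exact absurd hwe hnwf
      · -- match / match
        obtain ⟨hv1e, hoeqe, -⟩ := hoe_match e hce
        obtain ⟨hv1f, hoeqf, -⟩ := hoe_match f hcf
        have hs2 := hoeqe.symm.trans (hoefs.trans hoeqf)
        have hveq : (xx e).1 = (xx f).1 := by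
          rcases Sym2.eq_iff.mp hs2 with ⟨h1, -⟩ | ⟨h1, -⟩
          · exact Fin.castSucc_injective _ h1
          · exact absurd h1 (Fin.castSucc_lt_last _).ne
        rcases fin2_cases hce ((xx f).2) with hxf2 | hxf2
        · have hyf2 : (yy f).2 = (yy e).2 := by
            rcases fin2_cases hce ((yy f).2) with h | h
            · exact absurd (hxf2.trans h.symm) hcf
            · exact h
          rw [Sym2.eq_iff]
          exact Or.inl ⟨Prod.ext hveq hxf2.symm,
            Prod.ext ((hv1e.symm.trans hveq).trans hv1f) hyf2.symm⟩
        · have hyf2 : (yy f).2 = (xx e).2 := by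
            rcases fin2_cases hce ((yy f).2) with h | h
            · exact h
            · exact absurd (hxf2.trans h.symm) hcf
          rw [Sym2.eq_iff]
          exact Or.inr ⟨Prod.ext (hveq.trans hv1f) hyf2.symm,
            Prod.ext (hv1e.symm.trans hveq) hxf2.symm⟩
    · have hBeq : B (oe e) σe = B (oe f) σf := hval
      obtain ⟨z, hz1, hz2, hz3⟩ := hBcross (oe e) (oe f) hoef σe σf hBeq
      have hzwl : z ≠ wl := by
        intro hzw
        rw [hzw, hQwl] at hz3
        have h0 : ε ≤ (0:ℝ) := by
          rw [← norm_zero (E := ℝ × ℝ), ← hz3]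
          exact he3
        linarith
      obtain ⟨z', hz'⟩ := Fin.exists_castSucc_eq.mpr hzwl
      refine ⟨(z', be), ?_⟩
      show Tm ε be (Q z'.castSucc) = p
      rw [hz', ← hz3, ← he1]
      exact hse

end ThicknessAux

theorem stmt_6 (n : ℕ) (hn : 2 ≤ n) :
    ((⊤ : SimpleGraph (Fin n)) □ pathGraph 2).thickness ≤
      (⊤ : SimpleGraph (Fin (n + 1))).thickness := by
  classical
  rw [SimpleGraph.thickness, SimpleGraph.thickness]
  have hTne : {t | ∃ f : Fin t → SimpleGraph (Fin (n+1)),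
      (∀ i, f i ≤ (⊤ : SimpleGraph (Fin (n+1)))) ∧ (∀ i, (f i).IsPlanar) ∧
      (∀ e ∈ (⊤ : SimpleGraph (Fin (n+1))).edgeSet, ∃! i, e ∈ (f i).edgeSet)}.Nonempty := by
    obtain ⟨t, f, h1, h2, h3⟩ := ThicknessAux.exists_decomp (⊤ : SimpleGraph (Fin (n+1)))
    exact ⟨t, f, h1, h2, h3⟩
  obtain ⟨f, hle, hpl, hpart⟩ := Nat.sInf_mem hTne
  apply Nat.sInf_le
  refine ⟨fun i => ThicknessAux.lift (f i), fun i => ThicknessAux.lift_le _,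
    fun i => ThicknessAux.lift_planar _ (hpl i), ?_⟩
  intro e he
  induction e using Sym2.ind with
  | _ x y =>
    rw [SimpleGraph.mem_edgeSet, SimpleGraph.boxProd_adj] at he
    rcases he with ⟨h1, h2⟩ | ⟨h1, h2⟩
    · have h1' : x.1 ≠ y.1 := by simpa using h1
      have horig : s(x.1.castSucc, y.1.castSucc) ∈
          (⊤ : SimpleGraph (Fin (n+1))).edgeSet := by
        rw [SimpleGraph.mem_edgeSet, SimpleGraph.top_adj]
        exact fun hcc => h1' (Fin.castSucc_injective _ hcc)
      obtain ⟨i, hi, hiu⟩ := hpart _ horig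
      exact ⟨i, (ThicknessAux.mem_lift_iff_copy (f i) h1' h2).mpr hi,
        fun j hj => hiu j ((ThicknessAux.mem_lift_iff_copy (f j) h1' h2).mp hj)⟩
    · have h1' : x.2 ≠ y.2 := by
        rw [SimpleGraph.pathGraph_two_eq_top, SimpleGraph.top_adj] at h1
        exact h1
      have horig : s(x.1.castSucc, Fin.last n) ∈
          (⊤ : SimpleGraph (Fin (n+1))).edgeSet := by
        rw [SimpleGraph.mem_edgeSet, SimpleGraph.top_adj]
        exact (Fin.castSucc_lt_last _).ne
      obtain ⟨i, hi, hiu⟩ := hpart _ horig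
      exact ⟨i, (ThicknessAux.mem_lift_iff_match (f i) h2 h1').mpr hi,
        fun j hj => hiu j ((ThicknessAux.mem_lift_iff_match (f j) h2 h1').mp hj)⟩
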